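/- arXiv:1807.10909 — 2 statements merged into one kernel-verified Lean document; each statement's English description precedes it below -/
import Mathlib

section
/- Let s > 0 and assume ℱ satisfies assumptions (III) and (V). Let r ∈ (0, min(s,1)). If a = {a_k}_{k∈ℤ} and b = {b_{j,k}}_{j∈ℕ,k∈ℤ} satisfy C_a := sup_k |a_k| < ∞ and C_b := sup_{j∈ℕ} 2^{j(r+1/2)} sup_k |b_{j,k}| < ∞, then the function f(x) = Σ_{k∈ℤ} a_k φ_k(x) + Σ_{j∈ℕ} Σ_{k∈ℤ} b_{j,k} ψ_{j,k}(x) is well defined (at each point the φ-sum is finite and the ψ-sum converges absolutely), f is bounded, f is α-Hölder with exponent r, and there is a constant C > 0 depending only on r and the constants in (III) and (V) such that ‖f‖_∞ + sup_{x,h≠0}|f(x+h)−f(x)|/|h|^r ≤ C·max(C_a, C_b). In particular f ∈ B^r_{∞,∞}(ℝ). -/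
open MeasureTheory Filter ENNReal

noncomputable section

namespace FrameReg

/-- A real-valued function on `ℝ` is bounded. -/
def Bdd (f : ℝ → ℝ) : Prop := ∃ M : ℝ, ∀ x, |f x| ≤ M

/-- Membership in the Zygmund class `Λ(ℝ)`. -/
def MemZygmundClass (g : ℝ → ℝ) : Prop :=
  ∃ M : ℝ, ∀ x h : ℝ, 0 < h → |g (x + h) - 2 * g x + g (x - h)| ≤ M * h

/-- The Hölder norm `‖f‖_{C^ρ}` (with `ρ = ⌊ρ⌋ + α`, `α ∈ [0,1)`) is bounded by `C`:
all derivatives up to order `⌊ρ⌋` are bounded by `C` and the `⌊ρ⌋`-th derivative is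
`α`-Hölder with constant `C`. -/
def HolderNormLE (ρ C : ℝ) (f : ℝ → ℝ) : Prop :=
  (∀ i : ℕ, i ≤ ⌊ρ⌋₊ → ∀ x : ℝ, |iteratedDeriv i f x| ≤ C) ∧
  ∀ x y : ℝ, x ≠ y →
    |iteratedDeriv ⌊ρ⌋₊ f x - iteratedDeriv ⌊ρ⌋₊ f y| ≤ C * |x - y| ^ (ρ - (⌊ρ⌋₊ : ℝ))

/-- Membership in the Hölder space `B^r_{∞,∞}(ℝ)` for noninteger `r > 0`,
written `r = ⌊r⌋ + α` with `α ∈ (0,1)`: a bounded `C^{⌊r⌋}` function whose `⌊r⌋`-th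
derivative is `α`-Hölder. -/
def MemHolderSpace (r : ℝ) (f : ℝ → ℝ) : Prop :=
  Bdd f ∧ ContDiff ℝ (⌊r⌋₊) f ∧
  ∃ M : ℝ, ∀ x h : ℝ, h ≠ 0 →
    |iteratedDeriv ⌊r⌋₊ f (x + h) - iteratedDeriv ⌊r⌋₊ f x| ≤ M * |h| ^ (r - (⌊r⌋₊ : ℝ))

/-- Membership in the Hölder–Zygmund space `B^n_{∞,∞}(ℝ)` for an integer `n ≥ 1`:
a bounded `C^{n-1}` function whose `(n-1)`-st derivative is in the Zygmund class. -/
def MemZygmundSpace (n : ℕ) (f : ℝ → ℝ) : Prop :=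
  Bdd f ∧ ContDiff ℝ ((n - 1 : ℕ)) f ∧ MemZygmundClass (iteratedDeriv (n - 1) f)

/-- Membership in the Hölder–Zygmund space `B^r_{∞,∞}(ℝ)`, `r > 0`. -/
def MemB (r : ℝ) (f : ℝ → ℝ) : Prop :=
  ((∀ n : ℕ, (n : ℝ) ≠ r) → MemHolderSpace r f) ∧
  ∀ n : ℕ, (n : ℝ) = r → MemZygmundSpace n f

/-- All elements of the family `ℱ` are compactly supported. -/
def CompactlySupported (φ : ℤ → ℝ → ℝ) (ψ : ℕ+ → ℤ → ℝ → ℝ) : Prop :=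
  (∀ k, HasCompactSupport (φ k)) ∧ ∀ j k, HasCompactSupport (ψ j k)

/-- Assumption (I): `ℱ` is a Parseval tight frame for `L²(ℝ)`, i.e. every `f ∈ L²(ℝ)`
equals `Σ_k ⟨f,φ_k⟩ φ_k + Σ_j Σ_k ⟨f,ψ_{j,k}⟩ ψ_{j,k}` with convergence in `L²`. -/
def AssumpI (φ : ℤ → ℝ → ℝ) (ψ : ℕ+ → ℤ → ℝ → ℝ)
    (hφ : ∀ k, MemLp (φ k) 2 (volume : Measure ℝ))
    (hψ : ∀ j k, MemLp (ψ j k) 2 (volume : Measure ℝ)) : Prop :=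
  ∀ f : Lp ℝ 2 (volume : Measure ℝ),
    HasSum (fun i : ℤ ⊕ ℕ+ × ℤ =>
      Sum.elim
        (fun k => (∫ x : ℝ, f x * φ k x) • (hφ k).toLp (φ k))
        (fun p => (∫ x : ℝ, f x * ψ p.1 p.2 x) • (hψ p.1 p.2).toLp (ψ p.1 p.2)) i) f

/-- Assumption (II): uniform bound on the measures of the supports. -/
def AssumpII (Csupp : ℝ) (φ : ℤ → ℝ → ℝ) (ψ : ℕ+ → ℤ → ℝ → ℝ) : Prop :=
  (∀ k, volume (Function.support (φ k)) ≤ ENNReal.ofReal Csupp) ∧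
  ∀ j k, volume (Function.support (ψ j k)) ≤
    ENNReal.ofReal (Csupp * (2:ℝ) ^ (-((j:ℕ):ℝ)))

/-- Assumption (III): control on the number of elements whose support meets a given
bounded interval. -/
def AssumpIII (CΓ : ℝ) (φ : ℤ → ℝ → ℝ) (ψ : ℕ+ → ℤ → ℝ → ℝ) : Prop :=
  ∀ a b : ℝ, a ≤ b →
    ({k : ℤ | (Function.support (φ k) ∩ Set.Icc a b).Nonempty}.Finite ∧
      (Nat.card {k : ℤ | (Function.support (φ k) ∩ Set.Icc a b).Nonempty} : ℝ) ≤
        CΓ * ((b - a) + 1)) ∧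
    ∀ j : ℕ+,
      {k : ℤ | (Function.support (ψ j k) ∩ Set.Icc a b).Nonempty}.Finite ∧
      (Nat.card {k : ℤ | (Function.support (ψ j k) ∩ Set.Icc a b).Nonempty} : ℝ) ≤
        CΓ * ((2:ℝ) ^ ((j:ℕ)) * (b - a) + 1)

/-- First part of assumption (IV): `v` vanishing moments. -/
def VanishingMoments (v : ℕ) (ψ : ℕ+ → ℤ → ℝ → ℝ) : Prop :=
  ∀ n : ℕ, n < v → ∀ (j : ℕ+) (k : ℤ), ∫ x : ℝ, x ^ n * ψ j k x = 0

/-- Second part of assumption (IV): localization of the framelets around the centers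
`xc j k`. -/
def Localization (v : ℕ) (ψ : ℕ+ → ℤ → ℝ → ℝ) (xc : ℕ+ → ℤ → ℝ) : Prop :=
  ∀ ρ : ℝ, 0 ≤ ρ → ρ ≤ (v : ℝ) → ∃ Cvm > (0:ℝ), ∀ (j : ℕ+) (k : ℤ),
    ∫ x : ℝ, |x| ^ ρ * |ψ j k (x + xc j k)| ≤ Cvm * (2:ℝ) ^ (-((j:ℕ):ℝ) * (ρ + 1/2))

/-- Assumption (V): `ℱ ⊂ C^s(ℝ)` together with quantitative bounds on the
Hölder norms `‖·‖_{C^ρ}` for all `0 ≤ ρ ≤ s`. -/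
def AssumpV (s : ℝ) (φ : ℤ → ℝ → ℝ) (ψ : ℕ+ → ℤ → ℝ → ℝ) : Prop :=
  (∀ k, ContDiff ℝ (⌊s⌋₊) (φ k)) ∧ (∀ j k, ContDiff ℝ (⌊s⌋₊) (ψ j k)) ∧
  ∀ ρ : ℝ, 0 ≤ ρ → ρ ≤ s → ∃ Csm > (0:ℝ),
    (∀ k, HolderNormLE ρ Csm (φ k)) ∧
    ∀ (j : ℕ+) (k : ℤ),
      HolderNormLE ρ (Csm * (2:ℝ) ^ (((j:ℕ):ℝ) * (ρ + 1/2))) (ψ j k)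

/-- The function `Σ_k a_k φ_k + Σ_j Σ_k b_{j,k} ψ_{j,k}`. -/
def frameSum (φ : ℤ → ℝ → ℝ) (ψ : ℕ+ → ℤ → ℝ → ℝ)
    (a : ℤ → ℝ) (b : ℕ+ → ℤ → ℝ) : ℝ → ℝ :=
  fun x => (∑' k : ℤ, a k * φ k x) + ∑' p : ℕ+ × ℤ, b p.1 p.2 * ψ p.1 p.2 x

/-- `f = Σ_k a_k φ_k + Σ_j Σ_k b_{j,k} ψ_{j,k}` pointwise, the `φ`-sum having finitely
many nonzero terms at each point and the `ψ`-sum converging absolutely. -/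
def Represents (φ : ℤ → ℝ → ℝ) (ψ : ℕ+ → ℤ → ℝ → ℝ)
    (a : ℤ → ℝ) (b : ℕ+ → ℤ → ℝ) (f : ℝ → ℝ) : Prop :=
  (∀ x : ℝ, {k : ℤ | φ k x ≠ 0}.Finite) ∧
  (∀ x : ℝ, Summable fun p : ℕ+ × ℤ => |b p.1 p.2 * ψ p.1 p.2 x|) ∧
  ∀ x : ℝ, f x = frameSum φ ψ a b x

/-- `(a,b) ∈ ℓ^r_{∞,∞}`: the norm
`max(sup_k |a_k|, sup_j 2^{j(r+1/2)} sup_k |b_{j,k}|)` is finite. -/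
def SeqNormFin (r : ℝ) (a : ℤ → ℝ) (b : ℕ+ → ℤ → ℝ) : Prop :=
  ∃ C : ℝ, (∀ k, |a k| ≤ C) ∧
    ∀ (j : ℕ+) (k : ℤ), (2:ℝ) ^ (((j:ℕ):ℝ) * (r + 1/2)) * |b j k| ≤ C

/-- Powers of a bi-infinite matrix (rows and columns indexed by `ℤ`). -/
def matPow (Z : ℤ → ℤ → ℝ) : ℕ → ℤ → ℤ → ℝ
  | 0 => fun m i => if m = i then 1 else 0
  | n + 1 => fun m i => ∑' p : ℤ, Z m p * matPow Z n p i

/-- The Besov norm `‖f‖_{B^r_{∞,∞}} = max(‖f‖_∞, sup_j 2^{jr} ω^{⌊r⌋+1}_∞(f,2^{-j}))`,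
valued in `ℝ≥0∞`. -/
def besovNorm (r : ℝ) (f : ℝ → ℝ) : ℝ≥0∞ :=
  max (⨆ x : ℝ, ENNReal.ofReal |f x|)
    (⨆ j : ℕ+, ENNReal.ofReal ((2:ℝ) ^ (((j:ℕ):ℝ) * r)) *
      ⨆ (h : ℝ) (_ : |h| ≤ (2:ℝ) ^ (-((j:ℕ):ℝ))) (x : ℝ),
        ENNReal.ofReal
          (abs (∑ l ∈ Finset.range (⌊r⌋₊ + 2),
            ((⌊r⌋₊ + 1).choose l : ℝ) * (-1) ^ (⌊r⌋₊ + 1 - l) * f (x + (l:ℝ) * h))))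

/-- The sequence norm `‖(a,b)‖_{ℓ^r_{∞,∞}}`, valued in `ℝ≥0∞`. -/
def seqNorm (r : ℝ) (a : ℤ → ℝ) (b : ℕ+ → ℤ → ℝ) : ℝ≥0∞ :=
  max (⨆ k : ℤ, ENNReal.ofReal |a k|)
    (⨆ j : ℕ+, ENNReal.ofReal ((2:ℝ) ^ (((j:ℕ):ℝ) * (r + 1/2))) *
      ⨆ k : ℤ, ENNReal.ofReal |b j k|)

end FrameReg

/-!
Fix `ρ ∈ (r, min s 1)`. Applying (III) to degenerate intervals `[x, x]`, at every point at most
`C_Γ` of the `φ_k`, and at most `C_Γ` of the `ψ_{j,k}` of each level `j`, are nonzero. Together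
with (V) at the orders `0` and `ρ`, the level-`j` part of the series is bounded by `C 2^{-jr}` and
its increments over `h` by `C min(2^{-jr}, 2^{j(ρ-r)} |h|^ρ)`. Summing the first bound over `j`
gives boundedness; for `|h| ≤ 1`, splitting the second sum at the level `2^{-j} ≈ |h|` gives
the bound `C |h|^r`, and larger increments are controlled by boundedness.
-/

namespace FrameReg

theorem tsum_le_of_le_min_geometric {r ρ A B t : ℝ} {c : ℕ → ℝ} (hr : 0 < r) (hrρ : r < ρ)
    (ht0 : 0 < t) (ht1 : t ≤ 1) (hc0 : ∀ n, 0 ≤ c n)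
    (hcq : ∀ n, c n ≤ A * ((2:ℝ) ^ (ρ - r)) ^ n * t ^ ρ)
    (hcw : ∀ n, c n ≤ B * ((2:ℝ) ^ (-r)) ^ n) :
    ∑' n, c n ≤ (A / ((2:ℝ) ^ (ρ - r) - 1) + B * 2 ^ r / (1 - (2:ℝ) ^ (-r))) * t ^ r := by
  set q : ℝ := 2 ^ (ρ - r)
  set w : ℝ := 2 ^ (-r)
  have hq : 1 < q := Real.one_lt_rpow one_lt_two (by linarith)
  have hw0 : 0 < w := by positivity
  have hw1 : w < 1 := Real.rpow_lt_one_of_one_lt_of_neg one_lt_two (by linarith)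
  have htρ : 0 < t ^ ρ := Real.rpow_pos_of_pos ht0 ρ
  have hA : 0 ≤ A := nonneg_of_mul_nonneg_left (by simpa using (hc0 0).trans (hcq 0)) htρ
  -- `2 ^ J ≤ t⁻¹ < 2 ^ (J + 1)`: the first bound is used below level `J`, the second from `J` on.
  obtain ⟨J, hJ, hJ'⟩ := exists_nat_pow_near (one_le_inv_iff₀.mpr ⟨ht0, ht1⟩) one_lt_two
  have hgeom := summable_geometric_of_lt_one hw0.le hw1
  have hsum : Summable c := .of_nonneg_of_le hc0 hcw (hgeom.mul_left B)
  have head : ∑ n ∈ Finset.range J, c n ≤ A / (q - 1) * t ^ r := by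
    have hqJ : q ^ J * t ^ ρ ≤ t ^ r := by
      calc q ^ J * t ^ ρ = ((2:ℝ) ^ J) ^ (ρ - r) * t ^ ρ := by rw [Real.rpow_pow_comm zero_le_two]
        _ ≤ t⁻¹ ^ (ρ - r) * t ^ ρ := by gcongr
        _ = t ^ r := by
          rw [Real.inv_rpow ht0.le, ← Real.rpow_neg ht0.le, ← Real.rpow_add ht0]; ring_nf
    calc ∑ n ∈ Finset.range J, c n ≤ ∑ n ∈ Finset.range J, A * t ^ ρ * q ^ n :=
          Finset.sum_le_sum fun n _ => (hcq n).trans_eq (by ring)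
      _ = A * t ^ ρ * ((q ^ J - 1) / (q - 1)) := by rw [← Finset.mul_sum, geom_sum_eq hq.ne']
      _ ≤ A * t ^ ρ * (q ^ J / (q - 1)) := by
          have : 0 < q - 1 := by linarith
          gcongr
          linarith
      _ = A / (q - 1) * (q ^ J * t ^ ρ) := by ring
      _ ≤ A / (q - 1) * t ^ r := by gcongr
  have tail : ∑' n, c (n + J) ≤ B * 2 ^ r / (1 - w) * t ^ r := by
    have hwJ : w ^ J ≤ 2 ^ r * t ^ r := by
      calc w ^ J = ((2:ℝ) ^ J)⁻¹ ^ r := by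
            rw [Real.rpow_pow_comm zero_le_two, Real.rpow_neg (by positivity),
              Real.inv_rpow (by positivity)]
        _ ≤ (2 * t) ^ r := by
            gcongr
            rw [inv_le_iff_one_le_mul₀ (by positivity)]
            rw [pow_succ, inv_lt_iff_one_lt_mul₀ ht0] at hJ'
            linarith
        _ = 2 ^ r * t ^ r := Real.mul_rpow zero_le_two ht0.le
    calc ∑' n, c (n + J) ≤ ∑' n, B * w ^ J * w ^ n :=
          ((summable_nat_add_iff J).mpr hsum).tsum_le_tsum
            (fun n => (hcw (n + J)).trans_eq (by ring)) (hgeom.mul_left _)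
      _ = B * w ^ J / (1 - w) := by rw [tsum_mul_left, tsum_geometric_of_lt_one hw0.le hw1]; ring
      _ ≤ B * (2 ^ r * t ^ r) / (1 - w) := by
          have hB : 0 ≤ B := by simpa using (hc0 0).trans (hcw 0)
          gcongr
      _ = B * 2 ^ r / (1 - w) * t ^ r := by ring
  rw [← hsum.sum_add_tsum_nat_add J, add_mul]
  exact add_le_add head tail

theorem tsum_pnat_le_of_le_min_geometric {r ρ A B t : ℝ} {c : ℕ+ → ℝ} (hr : 0 < r)
    (hrρ : r < ρ) (ht0 : 0 < t) (ht1 : t ≤ 1) (hc0 : ∀ j, 0 ≤ c j)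
    (hcq : ∀ j : ℕ+, c j ≤ A * ((2:ℝ) ^ (ρ - r)) ^ (j : ℕ) * t ^ ρ)
    (hcw : ∀ j : ℕ+, c j ≤ B * ((2:ℝ) ^ (-r)) ^ (j : ℕ)) :
    ∑' j, c j ≤
      (A * 2 ^ (ρ - r) / ((2:ℝ) ^ (ρ - r) - 1) + B / (1 - (2:ℝ) ^ (-r))) * t ^ r := by
  rw [← Equiv.pnatEquivNat.symm.tsum_eq]
  refine (tsum_le_of_le_min_geometric (A := A * 2 ^ (ρ - r)) (B := B * 2 ^ (-r)) hr hrρ ht0 ht1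
    (fun n => hc0 _) (fun n => (hcq _).trans_eq ?_) (fun n => (hcw _).trans_eq ?_)).trans_eq ?_
  · simp only [Equiv.pnatEquivNat_symm_apply, Nat.succPNat_coe, pow_succ]; ring
  · simp only [Equiv.pnatEquivNat_symm_apply, Nat.succPNat_coe, pow_succ]; ring
  · rw [mul_assoc B, ← Real.rpow_add two_pos, neg_add_cancel, Real.rpow_zero, mul_one]

theorem hasSum_pnat_geometric {w : ℝ} (hw0 : 0 ≤ w) (hw1 : w < 1) :
    HasSum (fun j : ℕ+ => w ^ (j : ℕ)) (w / (1 - w)) := by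
  have hsum : w / (1 - w) + w ^ 0 = (1 - w)⁻¹ := by
    field_simp [(sub_pos.mpr hw1).ne']
    ring
  rw [hasSum_pnat_iff, hsum]
  exact hasSum_geometric_of_lt_one hw0 hw1

theorem abs_tsum_le_tsum_abs {ι : Type*} {f : ι → ℝ} (hf : Summable fun i => |f i|) :
    |∑' i, f i| ≤ ∑' i, |f i| := by
  simpa only [Real.norm_eq_abs] using
    norm_tsum_le_tsum_norm (f := f) (by simpa only [Real.norm_eq_abs] using hf)

theorem summable_abs_prod_of_tsum_le {α β : Type*} {F : α × β → ℝ} {c : α → ℝ}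
    (hF : ∀ i, Summable fun k => |F (i, k)|) (hFc : ∀ i, ∑' k, |F (i, k)| ≤ c i)
    (hc : Summable c) : Summable fun p => |F p| :=
  (summable_prod_of_nonneg fun _ => abs_nonneg _).mpr
    ⟨hF, hc.of_nonneg_of_le (fun _ => tsum_nonneg fun _ => abs_nonneg _) hFc⟩

theorem tsum_abs_prod_le {α β : Type*} {F : α × β → ℝ} {c : α → ℝ}
    (hF : ∀ i, Summable fun k => |F (i, k)|) (hFc : ∀ i, ∑' k, |F (i, k)| ≤ c i)
    (hc : Summable c) : ∑' p, |F p| ≤ ∑' i, c i := by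
  rw [(summable_abs_prod_of_tsum_le hF hFc hc).tsum_prod' hF]
  exact ((summable_prod_of_nonneg fun _ => abs_nonneg _).mp
    (summable_abs_prod_of_tsum_le hF hFc hc)).2.tsum_le_tsum hFc hc

theorem abs_sub_le_mul_rpow_of_abs_le_one {f : ℝ → ℝ} {r B H : ℝ} (hr : 0 ≤ r) (hB : ∀ x, |f x| ≤ B)
    (hH : ∀ x h, h ≠ 0 → |h| ≤ 1 → |f (x + h) - f x| ≤ H * |h| ^ r) (x h : ℝ) :
    |f (x + h) - f x| ≤ max H (2 * B) * |h| ^ r := by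
  have hB0 : 0 ≤ B := (abs_nonneg _).trans (hB 0)
  have hhr : 0 ≤ |h| ^ r := Real.rpow_nonneg (abs_nonneg h) r
  rcases eq_or_ne h 0 with rfl | hh0
  · simpa using mul_nonneg ((by positivity : (0:ℝ) ≤ 2 * B).trans (le_max_right H _)) hhr
  rcases le_or_gt |h| 1 with hh1 | hh1
  · exact (hH x h hh0 hh1).trans (by gcongr; exact le_max_left _ _)
  · calc |f (x + h) - f x| ≤ |f (x + h)| + |f x| := abs_sub _ _
      _ ≤ 2 * B * 1 := by linarith [hB (x + h), hB x]
      _ ≤ max H (2 * B) * |h| ^ r := by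
          gcongr
          · exact le_max_right _ _
          · exact Real.one_le_rpow hh1.le hr

def PointwiseSparse {ι α : Type*} (N : ℝ) (G : ι → α → ℝ) : Prop :=
  ∀ x, ∃ T : Finset ι, (T.card : ℝ) ≤ N ∧ ∀ k ∉ T, G k x = 0

namespace PointwiseSparse

variable {ι α : Type*} {N : ℝ} {G : ι → α → ℝ}

theorem finite_setOf_ne_zero (hG : PointwiseSparse N G) (x : α) : {k | G k x ≠ 0}.Finite := by
  obtain ⟨T, -, hT⟩ := hG x
  exact T.finite_toSet.subset fun k hk => by_contra fun hkT => hk (hT k hkT)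

theorem add_sub {G : ι → ℝ → ℝ} (hG : PointwiseSparse N G) (h : ℝ) :
    PointwiseSparse (2 * N) fun k x => G k (x + h) - G k x := by
  classical
  intro x
  obtain ⟨T₁, hT₁N, hT₁⟩ := hG (x + h)
  obtain ⟨T₂, hT₂N, hT₂⟩ := hG x
  refine ⟨T₁ ∪ T₂, ?_, fun k hk => ?_⟩
  · have : ((T₁ ∪ T₂).card : ℝ) ≤ T₁.card + T₂.card := by exact_mod_cast T₁.card_union_le T₂
    linarith
  · rw [Finset.mem_union, not_or] at hk
    simp only [hT₁ k hk.1, hT₂ k hk.2, sub_self]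

theorem summable_abs_mul (hG : PointwiseSparse N G) (c : ι → ℝ) (x : α) :
    Summable fun k => |c k * G k x| := by
  obtain ⟨T, -, hT⟩ := hG x
  exact summable_of_ne_finset_zero (s := T) fun k hk => by simp [hT k hk]

theorem tsum_abs_mul_le [Nonempty ι] (hG : PointwiseSparse N G) {c : ι → ℝ} {x : α} {M : ℝ}
    (hcG : ∀ k, |c k * G k x| ≤ M) : ∑' k, |c k * G k x| ≤ N * M := by
  obtain ⟨T, hTN, hT⟩ := hG x
  have hM : 0 ≤ M := (abs_nonneg _).trans (hcG (Classical.arbitrary ι))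
  rw [tsum_eq_sum fun k hk => by simp [hT k hk]]
  calc ∑ k ∈ T, |c k * G k x| ≤ T.card • M := Finset.sum_le_card_nsmul _ _ _ fun k _ => hcG k
    _ = T.card * M := nsmul_eq_mul _ _
    _ ≤ N * M := by gcongr

theorem abs_tsum_mul_le [Nonempty ι] (hG : PointwiseSparse N G) {c : ι → ℝ} {x : α} {M : ℝ}
    (hcG : ∀ k, |c k * G k x| ≤ M) : |∑' k, c k * G k x| ≤ N * M :=
  (abs_tsum_le_tsum_abs (hG.summable_abs_mul c x)).trans (hG.tsum_abs_mul_le hcG)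

end PointwiseSparse

theorem pointwiseSparse_of_card_le {ι : Type*} {N : ℝ} {G : ι → ℝ → ℝ}
    (hG : ∀ x, {k | (Function.support (G k) ∩ Set.Icc x x).Nonempty}.Finite ∧
      (Nat.card {k | (Function.support (G k) ∩ Set.Icc x x).Nonempty} : ℝ) ≤ N) :
    PointwiseSparse N G := by
  intro x
  obtain ⟨hfin, hcard⟩ := hG x
  refine ⟨hfin.toFinset, ?_, fun k hk => ?_⟩
  · rwa [← Set.ncard_eq_toFinset_card _ hfin, ← Nat.card_coe_set_eq]
  · by_contra hne
    exact hk (hfin.mem_toFinset.mpr ⟨x, hne, Set.left_mem_Icc.mpr le_rfl⟩)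

theorem AssumpIII.pointwiseSparse_scaling {CΓ : ℝ} {φ : ℤ → ℝ → ℝ} {ψ : ℕ+ → ℤ → ℝ → ℝ}
    (h : AssumpIII CΓ φ ψ) : PointwiseSparse CΓ φ :=
  pointwiseSparse_of_card_le fun x => by simpa using (h x x le_rfl).1

theorem AssumpIII.pointwiseSparse_framelet {CΓ : ℝ} {φ : ℤ → ℝ → ℝ} {ψ : ℕ+ → ℤ → ℝ → ℝ}
    (h : AssumpIII CΓ φ ψ) (j : ℕ+) : PointwiseSparse CΓ (ψ j) :=
  pointwiseSparse_of_card_le fun x => by simpa using (h x x le_rfl).2 j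

namespace HolderNormLE

variable {ρ C : ℝ} {f : ℝ → ℝ}

theorem abs_le (hf : HolderNormLE ρ C f) (x : ℝ) : |f x| ≤ C := by
  simpa using hf.1 0 (Nat.zero_le _) x

theorem abs_sub_le (hf : HolderNormLE ρ C f) (hρ : ρ < 1) (x y : ℝ) :
    |f x - f y| ≤ C * |x - y| ^ ρ := by
  rcases eq_or_ne x y with rfl | hxy
  · simpa using mul_nonneg ((abs_nonneg _).trans (hf.abs_le x)) (Real.rpow_nonneg le_rfl ρ)
  · simpa [Nat.floor_eq_zero.mpr hρ] using hf.2 x y hxy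

end HolderNormLE

theorem abs_mul_le_of_scale_bounds {j : ℕ} {r ρ β v Cβ Cv : ℝ}
    (hβ : (2:ℝ) ^ ((j:ℝ) * (r + 1/2)) * |β| ≤ Cβ) (hv : |v| ≤ Cv * 2 ^ ((j:ℝ) * (ρ + 1/2))) :
    |β * v| ≤ Cβ * Cv * ((2:ℝ) ^ (ρ - r)) ^ j := by
  have hCv : 0 ≤ Cv := nonneg_of_mul_nonneg_left ((abs_nonneg v).trans hv) (by positivity)
  have hscale : (2:ℝ) ^ ((j:ℝ) * (ρ + 1/2)) = 2 ^ ((j:ℝ) * (r + 1/2)) * (2 ^ (ρ - r)) ^ j := by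
    rw [← Real.rpow_natCast, ← Real.rpow_mul zero_le_two, ← Real.rpow_add two_pos]; ring_nf
  calc |β * v| = |β| * |v| := abs_mul β v
    _ ≤ |β| * (Cv * 2 ^ ((j:ℝ) * (ρ + 1/2))) := by gcongr
    _ = 2 ^ ((j:ℝ) * (r + 1/2)) * |β| * (Cv * (2 ^ (ρ - r)) ^ j) := by rw [hscale]; ring
    _ ≤ Cβ * (Cv * (2 ^ (ρ - r)) ^ j) := by gcongr
    _ = Cβ * Cv * ((2:ℝ) ^ (ρ - r)) ^ j := by ring

def scalingPart (φ : ℤ → ℝ → ℝ) (a : ℤ → ℝ) (x : ℝ) : ℝ :=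
  ∑' k, a k * φ k x

def frameletPart (ψ : ℕ+ → ℤ → ℝ → ℝ) (b : ℕ+ → ℤ → ℝ) (x : ℝ) : ℝ :=
  ∑' p : ℕ+ × ℤ, b p.1 p.2 * ψ p.1 p.2 x

def FrameletHolderNormLE (ρ C : ℝ) (ψ : ℕ+ → ℤ → ℝ → ℝ) : Prop :=
  ∀ (j : ℕ+) (k : ℤ), HolderNormLE ρ (C * 2 ^ (((j:ℕ):ℝ) * (ρ + 1/2))) (ψ j k)

def CoeffDecayLE (r M : ℝ) (b : ℕ+ → ℤ → ℝ) : Prop :=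
  ∀ (j : ℕ+) (k : ℤ), (2:ℝ) ^ (((j:ℕ):ℝ) * (r + 1/2)) * |b j k| ≤ M

section FrameSeries

variable {φ : ℤ → ℝ → ℝ} {ψ : ℕ+ → ℤ → ℝ → ℝ} {a : ℤ → ℝ} {b : ℕ+ → ℤ → ℝ}
  {N C₀ C₁ M r ρ : ℝ}

theorem frameSum_eq_add (x : ℝ) :
    frameSum φ ψ a b x = scalingPart φ a x + frameletPart ψ b x := rfl

theorem abs_scalingPart_le (hφ : PointwiseSparse N φ) (hφ₀ : ∀ k, HolderNormLE 0 C₀ (φ k))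
    (ha : ∀ k, |a k| ≤ M) (x : ℝ) : |scalingPart φ a x| ≤ N * (M * C₀) :=
  hφ.abs_tsum_mul_le fun k => by
    rw [abs_mul]
    exact mul_le_mul (ha k) ((hφ₀ k).abs_le x) (abs_nonneg _) ((abs_nonneg _).trans (ha k))

theorem abs_scalingPart_add_sub_le (hφ : PointwiseSparse N φ)
    (hφρ : ∀ k, HolderNormLE ρ C₁ (φ k)) (hr : 0 ≤ r) (hrρ : r ≤ ρ) (hρ : ρ < 1)
    (ha : ∀ k, |a k| ≤ M) (x h : ℝ) (hh₁ : |h| ≤ 1) :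
    |scalingPart φ a (x + h) - scalingPart φ a x| ≤ 2 * N * (M * (C₁ * |h| ^ r)) := by
  rw [scalingPart, scalingPart, ← ((hφ.summable_abs_mul a (x + h)).of_abs).tsum_sub
    (hφ.summable_abs_mul a x).of_abs]
  simp_rw [← mul_sub]
  refine (hφ.add_sub h).abs_tsum_mul_le fun k => ?_
  rw [abs_mul]
  refine mul_le_mul (ha k) ?_ (abs_nonneg _) ((abs_nonneg _).trans (ha k))
  calc |φ k (x + h) - φ k x| ≤ C₁ * |h| ^ ρ := by simpa using (hφρ k).abs_sub_le hρ (x + h) x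
    _ ≤ C₁ * |h| ^ r := mul_le_mul_of_nonneg_left
      (Real.rpow_le_rpow_of_exponent_ge' (abs_nonneg h) hh₁ hr hrρ)
      ((abs_nonneg _).trans ((hφρ k).abs_le x))

theorem abs_framelet_term_le
    (hψ₀ : FrameletHolderNormLE 0 C₀ ψ)
    (hb : CoeffDecayLE r M b) (j : ℕ+) (k : ℤ) (x : ℝ) :
    |b j k * ψ j k x| ≤ M * C₀ * ((2:ℝ) ^ (-r)) ^ (j:ℕ) := by
  simpa using abs_mul_le_of_scale_bounds (hb j k) ((hψ₀ j k).abs_le x)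

theorem abs_framelet_term_add_sub_le
    (hψ₀ : FrameletHolderNormLE 0 C₀ ψ)
    (hb : CoeffDecayLE r M b) (j : ℕ+) (k : ℤ) (x h : ℝ) :
    |b j k * (ψ j k (x + h) - ψ j k x)| ≤ M * (2 * C₀) * ((2:ℝ) ^ (-r)) ^ (j:ℕ) := by
  refine (abs_mul_le_of_scale_bounds (ρ := 0) (hb j k) ?_).trans_eq (by rw [zero_sub])
  calc |ψ j k (x + h) - ψ j k x| ≤ |ψ j k (x + h)| + |ψ j k x| := abs_sub _ _
    _ ≤ 2 * C₀ * 2 ^ (((j:ℕ):ℝ) * (0 + 1/2)) := by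
      linarith [(hψ₀ j k).abs_le (x + h), (hψ₀ j k).abs_le x]

theorem abs_framelet_term_add_sub_le_rpow
    (hψρ : FrameletHolderNormLE ρ C₁ ψ) (hρ : ρ < 1)
    (hb : CoeffDecayLE r M b) (j : ℕ+) (k : ℤ) (x h : ℝ) :
    |b j k * (ψ j k (x + h) - ψ j k x)| ≤ M * (C₁ * |h| ^ ρ) * ((2:ℝ) ^ (ρ - r)) ^ (j:ℕ) := by
  refine abs_mul_le_of_scale_bounds (hb j k) (((hψρ j k).abs_sub_le hρ (x + h) x).trans_eq ?_)
  rw [add_sub_cancel_left]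
  ring

theorem summable_abs_framelet_terms (hψ : ∀ j, PointwiseSparse N (ψ j))
    (hψ₀ : FrameletHolderNormLE 0 C₀ ψ)
    (hb : CoeffDecayLE r M b) (hr : 0 < r)
    (x : ℝ) : Summable fun p : ℕ+ × ℤ => |b p.1 p.2 * ψ p.1 p.2 x| :=
  summable_abs_prod_of_tsum_le (fun j => (hψ j).summable_abs_mul (b j) x)
    (fun j => (hψ j).tsum_abs_mul_le fun k => abs_framelet_term_le hψ₀ hb j k x)
    (((hasSum_pnat_geometric (by positivity) (Real.rpow_lt_one_of_one_lt_of_neg one_lt_two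
      (neg_neg_of_pos hr))).summable.mul_left (M * C₀)).mul_left N)

theorem abs_frameletPart_le (hψ : ∀ j, PointwiseSparse N (ψ j))
    (hψ₀ : FrameletHolderNormLE 0 C₀ ψ)
    (hb : CoeffDecayLE r M b) (hr : 0 < r)
    (x : ℝ) : |frameletPart ψ b x| ≤ N * (M * C₀) * (2 ^ (-r) / (1 - 2 ^ (-r))) := by
  have hgeom := hasSum_pnat_geometric (w := 2 ^ (-r)) (by positivity)
    (Real.rpow_lt_one_of_one_lt_of_neg one_lt_two (neg_neg_of_pos hr))
  refine (abs_tsum_le_tsum_abs (summable_abs_framelet_terms hψ hψ₀ hb hr x)).trans ?_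
  refine (tsum_abs_prod_le (F := fun p => b p.1 p.2 * ψ p.1 p.2 x)
    (fun j => (hψ j).summable_abs_mul (b j) x)
    (fun j => (hψ j).tsum_abs_mul_le fun k => abs_framelet_term_le hψ₀ hb j k x)
    ((hgeom.summable.mul_left (M * C₀)).mul_left N)).trans_eq ?_
  rw [tsum_mul_left, tsum_mul_left, hgeom.tsum_eq]
  ring

theorem abs_frameletPart_add_sub_le (hψ : ∀ j, PointwiseSparse N (ψ j))
    (hψ₀ : FrameletHolderNormLE 0 C₀ ψ)
    (hψρ : FrameletHolderNormLE ρ C₁ ψ)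
    (hb : CoeffDecayLE r M b)
    (hr : 0 < r) (hrρ : r < ρ) (hρ : ρ < 1) (x h : ℝ) (hh₀ : h ≠ 0) (hh₁ : |h| ≤ 1) :
    |frameletPart ψ b (x + h) - frameletPart ψ b x| ≤
      (2 * N * (M * C₁) * 2 ^ (ρ - r) / (2 ^ (ρ - r) - 1) +
        2 * N * (M * (2 * C₀)) / (1 - 2 ^ (-r))) * |h| ^ r := by
  have hgeom := hasSum_pnat_geometric (w := 2 ^ (-r)) (by positivity)
    (Real.rpow_lt_one_of_one_lt_of_neg one_lt_two (neg_neg_of_pos hr))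
  have hsum := summable_abs_framelet_terms hψ hψ₀ hb hr
  have hlevel : ∀ j, Summable fun k => |b j k * (ψ j k (x + h) - ψ j k x)| :=
    fun j => ((hψ j).add_sub h).summable_abs_mul (b j) x
  have hlevel_le : ∀ j, ∑' k, |b j k * (ψ j k (x + h) - ψ j k x)| ≤
      2 * N * (M * (2 * C₀)) * ((2:ℝ) ^ (-r)) ^ (j:ℕ) := fun j =>
    (((hψ j).add_sub h).tsum_abs_mul_le fun k =>
      abs_framelet_term_add_sub_le hψ₀ hb j k x h).trans_eq (by ring)
  have hlevel_le_rpow : ∀ j, ∑' k, |b j k * (ψ j k (x + h) - ψ j k x)| ≤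
      2 * N * (M * C₁) * ((2:ℝ) ^ (ρ - r)) ^ (j:ℕ) * |h| ^ ρ := fun j =>
    (((hψ j).add_sub h).tsum_abs_mul_le fun k =>
      abs_framelet_term_add_sub_le_rpow hψρ hρ hb j k x h).trans_eq (by ring)
  have hlevel_summable := hgeom.summable.mul_left (2 * N * (M * (2 * C₀)))
  rw [frameletPart, frameletPart, ← (hsum (x + h)).of_abs.tsum_sub (hsum x).of_abs]
  simp_rw [← mul_sub]
  calc _ ≤ ∑' p : ℕ+ × ℤ, |b p.1 p.2 * (ψ p.1 p.2 (x + h) - ψ p.1 p.2 x)| :=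
        abs_tsum_le_tsum_abs (summable_abs_prod_of_tsum_le hlevel hlevel_le hlevel_summable)
    _ ≤ ∑' j : ℕ+, ∑' k, |b j k * (ψ j k (x + h) - ψ j k x)| :=
        tsum_abs_prod_le hlevel (fun _ => le_rfl)
          (hlevel_summable.of_nonneg_of_le (fun _ => tsum_nonneg fun _ => abs_nonneg _) hlevel_le)
    _ ≤ _ := tsum_pnat_le_of_le_min_geometric hr hrρ (abs_pos.mpr hh₀) hh₁
        (fun _ => tsum_nonneg fun _ => abs_nonneg _) hlevel_le_rpow hlevel_le

theorem abs_frameSum_le (hφ : PointwiseSparse N φ) (hψ : ∀ j, PointwiseSparse N (ψ j))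
    (hφ₀ : ∀ k, HolderNormLE 0 C₀ (φ k))
    (hψ₀ : FrameletHolderNormLE 0 C₀ ψ)
    (ha : ∀ k, |a k| ≤ M)
    (hb : CoeffDecayLE r M b) (hr : 0 < r)
    (x : ℝ) : |frameSum φ ψ a b x| ≤ N * C₀ / (1 - 2 ^ (-r)) * M := by
  have hw : 1 - (2:ℝ) ^ (-r) ≠ 0 :=
    (sub_pos.mpr (Real.rpow_lt_one_of_one_lt_of_neg one_lt_two (neg_neg_of_pos hr))).ne'
  rw [frameSum_eq_add]
  refine (abs_add_le _ _).trans ((add_le_add (abs_scalingPart_le hφ hφ₀ ha x)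
    (abs_frameletPart_le hψ hψ₀ hb hr x)).trans_eq ?_)
  field_simp
  ring

theorem abs_frameSum_add_sub_le (hφ : PointwiseSparse N φ) (hψ : ∀ j, PointwiseSparse N (ψ j))
    (hφρ : ∀ k, HolderNormLE ρ C₁ (φ k))
    (hψ₀ : FrameletHolderNormLE 0 C₀ ψ)
    (hψρ : FrameletHolderNormLE ρ C₁ ψ)
    (ha : ∀ k, |a k| ≤ M)
    (hb : CoeffDecayLE r M b)
    (hr : 0 < r) (hrρ : r < ρ) (hρ : ρ < 1) (x h : ℝ) (hh₀ : h ≠ 0) (hh₁ : |h| ≤ 1) :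
    |frameSum φ ψ a b (x + h) - frameSum φ ψ a b x| ≤
      (2 * N * C₁ * (1 + 2 ^ (ρ - r) / (2 ^ (ρ - r) - 1)) + 4 * N * C₀ / (1 - 2 ^ (-r))) * M *
        |h| ^ r := by
  rw [frameSum_eq_add, frameSum_eq_add, add_sub_add_comm]
  refine (abs_add_le _ _).trans ((add_le_add
    (abs_scalingPart_add_sub_le hφ hφρ hr.le hrρ.le hρ ha x h hh₁)
    (abs_frameletPart_add_sub_le hψ hψ₀ hψρ hb hr hrρ hρ x h hh₀ hh₁)).trans_eq ?_)
  ring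

end FrameSeries

theorem statement_2_general
    (φ : ℤ → ℝ → ℝ) (ψ : ℕ+ → ℤ → ℝ → ℝ)
    (s : ℝ)
    (CΓ : ℝ) (hCΓ : 0 < CΓ)
    (hIII : AssumpIII CΓ φ ψ)
    (hV : AssumpV s φ ψ)
    (r : ℝ) (hr : 0 < r) (hr' : r < min s 1) :
    ∃ C > (0:ℝ), ∀ (a : ℤ → ℝ) (b : ℕ+ → ℤ → ℝ) (Ca Cb : ℝ),
      (∀ k, |a k| ≤ Ca) →
      (∀ (j : ℕ+) (k : ℤ), (2:ℝ) ^ (((j:ℕ):ℝ) * (r + 1/2)) * |b j k| ≤ Cb) →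
      (∀ x : ℝ, {k : ℤ | φ k x ≠ 0}.Finite) ∧
      (∀ x : ℝ, Summable fun p : ℕ+ × ℤ => |b p.1 p.2 * ψ p.1 p.2 x|) ∧
      Bdd (frameSum φ ψ a b) ∧
      (∃ M : ℝ, ∀ x h : ℝ, h ≠ 0 →
        |frameSum φ ψ a b (x + h) - frameSum φ ψ a b x| ≤ M * |h| ^ r) ∧
      ∀ x y h : ℝ, h ≠ 0 →
        |frameSum φ ψ a b x| +
          |frameSum φ ψ a b (y + h) - frameSum φ ψ a b y| / |h| ^ r ≤
          C * max Ca Cb := by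
  obtain ⟨ρ, hrρ, hρ⟩ := exists_between hr'
  rw [lt_min_iff] at hρ
  obtain ⟨C₀, hC₀, hφ₀, hψ₀⟩ := hV.2.2 0 le_rfl (hr.trans (hrρ.trans hρ.1)).le
  obtain ⟨C₁, -, hφρ, hψρ⟩ := hV.2.2 ρ (hr.trans hrρ).le hρ.1.le
  have hφ := hIII.pointwiseSparse_scaling
  have hψ := hIII.pointwiseSparse_framelet
  set K₀ := CΓ * C₀ / (1 - 2 ^ (-r))
  set H := 2 * CΓ * C₁ * (1 + 2 ^ (ρ - r) / (2 ^ (ρ - r) - 1)) + 4 * CΓ * C₀ / (1 - 2 ^ (-r))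
  have hK₀ : 0 < K₀ := div_pos (mul_pos hCΓ hC₀)
    (sub_pos.mpr (Real.rpow_lt_one_of_one_lt_of_neg one_lt_two (neg_neg_of_pos hr)))
  refine ⟨K₀ + max H (2 * K₀), by positivity, fun a b Ca Cb ha hb => ?_⟩
  have ha' : ∀ k, |a k| ≤ max Ca Cb := fun k => (ha k).trans (le_max_left _ _)
  have hb' : CoeffDecayLE r (max Ca Cb) b := fun j k => (hb j k).trans (le_max_right _ _)
  have hM : 0 ≤ max Ca Cb := (abs_nonneg _).trans (ha' 0)
  have hbdd : ∀ x, |frameSum φ ψ a b x| ≤ K₀ * max Ca Cb :=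
    abs_frameSum_le hφ hψ hφ₀ hψ₀ ha' hb' hr
  have hhol : ∀ x h, |frameSum φ ψ a b (x + h) - frameSum φ ψ a b x| ≤
      max H (2 * K₀) * max Ca Cb * |h| ^ r := fun x h =>
    (abs_sub_le_mul_rpow_of_abs_le_one hr.le hbdd
      (abs_frameSum_add_sub_le hφ hψ hφρ hψ₀ hψρ ha' hb' hr hrρ hρ.2) x h).trans_eq
      (by rw [max_mul_of_nonneg _ _ hM, mul_assoc 2 K₀])
  refine ⟨hφ.finite_setOf_ne_zero, summable_abs_framelet_terms hψ hψ₀ hb' hr, ⟨_, hbdd⟩,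
    ⟨_, fun x h _ => hhol x h⟩, fun x y h hh => ?_⟩
  calc _ ≤ K₀ * max Ca Cb + max H (2 * K₀) * max Ca Cb :=
        add_le_add (hbdd x) ((div_le_iff₀ (by positivity)).mpr (hhol y h))
    _ = _ := by ring

/-- Proposition 2.2: under (III) and (V), bounded coefficient
sequences with decay `2^{-j(r+1/2)}` produce a bounded `r`-Hölder function, with
norm controlled by `C·max(C_a, C_b)`. -/
theorem statement_2
    (φ : ℤ → ℝ → ℝ) (ψ : ℕ+ → ℤ → ℝ → ℝ)
    (hcs : CompactlySupported φ ψ)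
    (s : ℝ) (hs : 0 < s)
    (CΓ : ℝ) (hCΓ : 0 < CΓ)
    (hIII : AssumpIII CΓ φ ψ)
    (hV : AssumpV s φ ψ)
    (r : ℝ) (hr : 0 < r) (hr' : r < min s 1) :
    ∃ C > (0:ℝ), ∀ (a : ℤ → ℝ) (b : ℕ+ → ℤ → ℝ) (Ca Cb : ℝ),
      (∀ k, |a k| ≤ Ca) →
      (∀ (j : ℕ+) (k : ℤ), (2:ℝ) ^ (((j:ℕ):ℝ) * (r + 1/2)) * |b j k| ≤ Cb) →
      (∀ x : ℝ, {k : ℤ | φ k x ≠ 0}.Finite) ∧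
      (∀ x : ℝ, Summable fun p : ℕ+ × ℤ => |b p.1 p.2 * ψ p.1 p.2 x|) ∧
      Bdd (frameSum φ ψ a b) ∧
      (∃ M : ℝ, ∀ x h : ℝ, h ≠ 0 →
        |frameSum φ ψ a b (x + h) - frameSum φ ψ a b x| ≤ M * |h| ^ r) ∧
      ∀ x y h : ℝ, h ≠ 0 →
        |frameSum φ ψ a b x| +
          |frameSum φ ψ a b (y + h) - frameSum φ ψ a b y| / |h| ^ r ≤
          C * max Ca Cb :=
  statement_2_general φ ψ s CΓ hCΓ hIII hV r hr hr'

end FrameReg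
end
end

section
/- Assume ℱ ⊂ C⁰(ℝ) satisfies assumptions (I), (II) and (IV) with 1 vanishing moment, and that sup_k ‖φ_k‖_∞ < ∞. Let r ∈ (0,1). Then for every f ∈ B^r_{∞,∞}(ℝ) ∩ L²(ℝ), the canonical frame coefficients a_k = ⟨f,φ_k⟩ and b_{j,k} = ⟨f,ψ_{j,k}⟩ satisfy: |a_k| ≤ C_φ ‖f‖_∞ for all k ∈ ℤ, where C_φ > 0 depends only on C_supp and sup_k‖φ_k‖_∞, and |b_{j,k}| ≤ C_{vm,r} · |f|_{C^r} · 2^{−j(r+1/2)} for all j ∈ ℕ, k ∈ ℤ, where |f|_{C^r} = sup_{x,h≠0}|f(x+h)−f(x)|/|h|^r. Consequently (a,b) ∈ ℓ^r_{∞,∞} and f = Σ_k a_k φ_k + Σ_{j,k} b_{j,k} ψ_{j,k} is a representation of f with coefficients in ℓ^r_{∞,∞}. -/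
/-! The scaling coefficients are controlled by the trivial `L¹`–`L^∞` bound on the support of
`φ_k`, whose measure is at most `C_supp`. For a framelet coefficient, the vanishing moment lets
one replace `f` by `f - f (x_{j,k})`, which is at most `|f|_{C^r} |x - x_{j,k}|^r`; the
localization bound (IV) with `ρ = r` then gives the decay `2^{-j(r+1/2)}`. The expansion of `f`
is the Parseval frame identity (I). -/

open MeasureTheory Filter ENNReal

noncomputable section

namespace FrameReg

open Function

theorem abs_integral_mul_le_of_abs_le {X : Type*} [MeasurableSpace X] [Nonempty X]
    {μ : Measure X} {f g : X → ℝ} {M C S : ℝ} (hf : ∀ x, |f x| ≤ M) (hg : ∀ x, |g x| ≤ C)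
    (hS : 0 ≤ S) (hsupp : μ (support g) ≤ ENNReal.ofReal S) :
    |∫ x, f x * g x ∂μ| ≤ S * C * M := by
  have hM : 0 ≤ M := (abs_nonneg _).trans (hf (Classical.arbitrary X))
  have hC : 0 ≤ C := (abs_nonneg _).trans (hg (Classical.arbitrary X))
  have hfg : ∀ x ∈ support g, ‖f x * g x‖ ≤ M * C := fun x _ => by
    rw [Real.norm_eq_abs, abs_mul]
    exact mul_le_mul (hf x) (hg x) (abs_nonneg _) hM
  have hvol : μ.real (support g) ≤ S := ENNReal.toReal_le_of_le_ofReal hS hsupp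
  rw [← setIntegral_eq_integral_of_forall_compl_eq_zero
    (s := support g) fun x hx => by rw [notMem_support.mp hx, mul_zero]]
  calc |∫ x in support g, f x * g x ∂μ|
      ≤ M * C * μ.real (support g) :=
        norm_setIntegral_le_of_norm_le_const (hsupp.trans_lt ENNReal.ofReal_lt_top) hfg
    _ ≤ M * C * S := by gcongr
    _ = S * C * M := by ring

theorem abs_integral_mul_le_of_holder {f ψ : ℝ → ℝ} {r H c B : ℝ}
    (hf : AEStronglyMeasurable f)
    (hfH : ∀ x h, h ≠ 0 → |f (x + h) - f x| ≤ H * |h| ^ r)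
    (hψ : Integrable ψ) (hψ0 : ∫ x, ψ x = 0)
    (hmom : Integrable fun x => |x - c| ^ r * |ψ x|)
    (hB : ∫ x, |x| ^ r * |ψ (x + c)| ≤ B) :
    |∫ x, f x * ψ x| ≤ H * B := by
  have hH : 0 ≤ H := by simpa using (abs_nonneg _).trans (hfH 0 1 one_ne_zero)
  have hdom : ∀ x, ‖(f x - f c) * ψ x‖ ≤ H * (|x - c| ^ r * |ψ x|) := fun x => by
    rw [Real.norm_eq_abs, abs_mul, ← mul_assoc]
    gcongr
    rcases eq_or_ne x c with rfl | hx
    · simp only [sub_self, abs_zero]; positivity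
    · simpa using hfH c (x - c) (sub_ne_zero.mpr hx)
  have hint : Integrable fun x => (f x - f c) * ψ x :=
    (hmom.const_mul H).mono' ((hf.sub aestronglyMeasurable_const).mul hψ.1)
      (.of_forall hdom)
  have hcentre : ∫ x, f x * ψ x = ∫ x, (f x - f c) * ψ x := by
    have hsplit : (fun x => f x * ψ x) = fun x => (f x - f c) * ψ x + f c * ψ x := by
      ext; ring
    rw [hsplit, integral_add hint (hψ.const_mul _), integral_const_mul, hψ0, mul_zero, add_zero]
  calc |∫ x, f x * ψ x| = ‖∫ x, (f x - f c) * ψ x‖ := by rw [hcentre, Real.norm_eq_abs]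
    _ ≤ ∫ x, H * (|x - c| ^ r * |ψ x|) :=
        norm_integral_le_of_norm_le (hmom.const_mul H) (.of_forall hdom)
    _ = H * ∫ x, |x| ^ r * |ψ (x + c)| := by
        rw [integral_const_mul, ← integral_add_right_eq_self _ c]
        simp only [add_sub_cancel_right]
    _ ≤ H * B := by gcongr

theorem integrable_abs_sub_rpow_mul_abs {ψ : ℝ → ℝ} {r : ℝ} (c : ℝ) (hr : 0 ≤ r)
    (hψ : Continuous ψ) (hψc : HasCompactSupport ψ) :
    Integrable fun x => |x - c| ^ r * |ψ x| :=
  (((continuous_abs.comp (continuous_sub_right c)).rpow_const fun _ => .inr hr).mul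
    hψ.abs).integrable_of_hasCompactSupport hψc.abs.mul_left

theorem seqNormFin_of_abs_le {r A B : ℝ} {a : ℤ → ℝ} {b : ℕ+ → ℤ → ℝ}
    (ha : ∀ k, |a k| ≤ A) (hb : ∀ j k, |b j k| ≤ B * (2:ℝ) ^ (-((j:ℕ):ℝ) * (r + 1/2))) :
    SeqNormFin r a b := by
  refine ⟨max A B, fun k => (ha k).trans (le_max_left _ _), fun j k => ?_⟩
  calc (2:ℝ) ^ (((j:ℕ):ℝ) * (r + 1/2)) * |b j k|
      ≤ 2 ^ (((j:ℕ):ℝ) * (r + 1/2)) * (B * 2 ^ (-((j:ℕ):ℝ) * (r + 1/2))) := by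
        gcongr; exact hb j k
    _ = B := by
        rw [neg_mul, Real.rpow_neg zero_le_two]
        field_simp
    _ ≤ max A B := le_max_right _ _

theorem AssumpI.hasSum_toLp {φ : ℤ → ℝ → ℝ} {ψ : ℕ+ → ℤ → ℝ → ℝ}
    {hφ : ∀ k, MemLp (φ k) 2 (volume : Measure ℝ)}
    {hψ : ∀ j k, MemLp (ψ j k) 2 (volume : Measure ℝ)} (hI : AssumpI φ ψ hφ hψ)
    {f : ℝ → ℝ} (hf : MemLp f 2 (volume : Measure ℝ)) :
    HasSum (fun i : ℤ ⊕ ℕ+ × ℤ =>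
      Sum.elim
        (fun k => (∫ x : ℝ, f x * φ k x) • (hφ k).toLp (φ k))
        (fun p => (∫ x : ℝ, f x * ψ p.1 p.2 x) • (hψ p.1 p.2).toLp (ψ p.1 p.2)) i)
      (hf.toLp f) := by
  convert hI (hf.toLp f) using 4 <;>
  exact congrArg₂ _ (integral_congr_ae hf.coeFn_toLp.symm.mul_right) rfl

theorem statement_3_general
    (φ : ℤ → ℝ → ℝ) (ψ : ℕ+ → ℤ → ℝ → ℝ)
    (hψcont : ∀ j k, Continuous (ψ j k))
    (hcs : CompactlySupported φ ψ)
    (hφmem : ∀ k, MemLp (φ k) 2 (volume : Measure ℝ))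
    (hψmem : ∀ j k, MemLp (ψ j k) 2 (volume : Measure ℝ))
    (Csupp : ℝ) (hCsupp : 0 < Csupp)
    (Cφsup : ℝ) (hCφsup : ∀ (k : ℤ) (x : ℝ), |φ k x| ≤ Cφsup)
    (xc : ℕ+ → ℤ → ℝ)
    (hI : AssumpI φ ψ hφmem hψmem)
    (hII : AssumpII Csupp φ ψ)
    (hIV1 : VanishingMoments 1 ψ)
    (r : ℝ) (hr0 : 0 < r)
    (Cvm : ℝ)
    (hloc : ∀ (j : ℕ+) (k : ℤ),
      ∫ x : ℝ, |x| ^ r * |ψ j k (x + xc j k)| ≤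
        Cvm * (2:ℝ) ^ (-((j:ℕ):ℝ) * (r + 1/2))) :
    ∃ Cφ > (0:ℝ), ∀ (f : ℝ → ℝ) (hf : MemLp f 2 (volume : Measure ℝ)) (Mf Hf : ℝ),
      (∀ x, |f x| ≤ Mf) →
      (∀ x h : ℝ, h ≠ 0 → |f (x + h) - f x| ≤ Hf * |h| ^ r) →
      (∀ k : ℤ, |∫ x : ℝ, f x * φ k x| ≤ Cφ * Mf) ∧
      (∀ (j : ℕ+) (k : ℤ),
        |∫ x : ℝ, f x * ψ j k x| ≤ Cvm * Hf * (2:ℝ) ^ (-((j:ℕ):ℝ) * (r + 1/2))) ∧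
      SeqNormFin r (fun k => ∫ x : ℝ, f x * φ k x)
        (fun j k => ∫ x : ℝ, f x * ψ j k x) ∧
      HasSum (fun i : ℤ ⊕ ℕ+ × ℤ =>
        Sum.elim
          (fun k => (∫ x : ℝ, f x * φ k x) • (hφmem k).toLp (φ k))
          (fun p => (∫ x : ℝ, f x * ψ p.1 p.2 x) • (hψmem p.1 p.2).toLp (ψ p.1 p.2)) i)
        (hf.toLp f) := by
  have hCφsup0 : 0 ≤ Cφsup := (abs_nonneg _).trans (hCφsup 0 0)
  refine ⟨Csupp * Cφsup + 1, by positivity, fun f hf Mf Hf hMf hHf => ?_⟩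
  have hMf0 : 0 ≤ Mf := (abs_nonneg _).trans (hMf 0)
  have ha : ∀ k, |∫ x, f x * φ k x| ≤ (Csupp * Cφsup + 1) * Mf := fun k =>
    (abs_integral_mul_le_of_abs_le hMf (hCφsup k) hCsupp.le (hII.1 k)).trans (by nlinarith)
  have hb : ∀ j k, |∫ x, f x * ψ j k x| ≤ Cvm * Hf * (2:ℝ) ^ (-((j:ℕ):ℝ) * (r + 1/2)) :=
    fun j k => (abs_integral_mul_le_of_holder hf.aestronglyMeasurable hHf
      ((hψcont j k).integrable_of_hasCompactSupport (hcs.2 j k))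
      (by simpa using hIV1 0 one_pos j k)
      (integrable_abs_sub_rpow_mul_abs _ hr0.le (hψcont j k) (hcs.2 j k)) (hloc j k)).trans_eq
      (by ring)
  exact ⟨ha, hb, seqNormFin_of_abs_le ha hb, hI.hasSum_toLp hf⟩

/-- Proposition 2.3: under (I), (II), (IV) with one vanishing
moment and uniformly bounded `φ_k`, the canonical frame coefficients of any
`f ∈ B^r_{∞,∞}(ℝ) ∩ L²(ℝ)`, `r ∈ (0,1)`, lie in `ℓ^r_{∞,∞}`, with the stated
quantitative bounds. -/
theorem statement_3
    (φ : ℤ → ℝ → ℝ) (ψ : ℕ+ → ℤ → ℝ → ℝ)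
    (hφcont : ∀ k, Continuous (φ k))
    (hψcont : ∀ j k, Continuous (ψ j k))
    (hcs : CompactlySupported φ ψ)
    (hφmem : ∀ k, MemLp (φ k) 2 (volume : Measure ℝ))
    (hψmem : ∀ j k, MemLp (ψ j k) 2 (volume : Measure ℝ))
    (Csupp : ℝ) (hCsupp : 0 < Csupp)
    (Cφsup : ℝ) (hCφsup : ∀ (k : ℤ) (x : ℝ), |φ k x| ≤ Cφsup)
    (xc : ℕ+ → ℤ → ℝ)
    (hI : AssumpI φ ψ hφmem hψmem)
    (hII : AssumpII Csupp φ ψ)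
    (hIV1 : VanishingMoments 1 ψ)
    (hIV2 : Localization 1 ψ xc)
    (r : ℝ) (hr0 : 0 < r) (hr1 : r < 1)
    (Cvm : ℝ) (hCvm : 0 < Cvm)
    (hloc : ∀ (j : ℕ+) (k : ℤ),
      ∫ x : ℝ, |x| ^ r * |ψ j k (x + xc j k)| ≤
        Cvm * (2:ℝ) ^ (-((j:ℕ):ℝ) * (r + 1/2))) :
    ∃ Cφ > (0:ℝ), ∀ (f : ℝ → ℝ) (hf : MemLp f 2 (volume : Measure ℝ)) (Mf Hf : ℝ),
      (∀ x, |f x| ≤ Mf) →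
      (∀ x h : ℝ, h ≠ 0 → |f (x + h) - f x| ≤ Hf * |h| ^ r) →
      (∀ k : ℤ, |∫ x : ℝ, f x * φ k x| ≤ Cφ * Mf) ∧
      (∀ (j : ℕ+) (k : ℤ),
        |∫ x : ℝ, f x * ψ j k x| ≤ Cvm * Hf * (2:ℝ) ^ (-((j:ℕ):ℝ) * (r + 1/2))) ∧
      SeqNormFin r (fun k => ∫ x : ℝ, f x * φ k x)
        (fun j k => ∫ x : ℝ, f x * ψ j k x) ∧
      HasSum (fun i : ℤ ⊕ ℕ+ × ℤ =>
        Sum.elim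
          (fun k => (∫ x : ℝ, f x * φ k x) • (hφmem k).toLp (φ k))
          (fun p => (∫ x : ℝ, f x * ψ p.1 p.2 x) • (hψmem p.1 p.2).toLp (ψ p.1 p.2)) i)
        (hf.toLp f) :=
  statement_3_general φ ψ hψcont hcs hφmem hψmem Csupp hCsupp Cφsup hCφsup xc hI hII hIV1 r hr0 Cvm
    hloc

end FrameReg
end
end
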